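/- Let G be a strongly connected Eulerian digraph. Then G has the natural Riemann–Roch property, i.e., dist(x) − dist(d⁺ − x) = |E(G)|/2 − deg(x) holds for every chip-distribution x, if and only if G is bidirected, i.e., d⃗(u,v) = d⃗(v,u) for every pair of vertices u, v. -/

import Mathlib

open Finset

variable {V : Type} [Fintype V] [DecidableEq V]

/-- The outdegree of a vertex `v` in the multidigraph with multiplicity function `m`
(`m u v` is the number of directed edges from `u` to `v`). -/
def outdeg (m : V → V → ℕ) (v : V) : ℤ := ∑ u, (m v u : ℤ)

/-- The indegree of a vertex. -/
def indeg (m : V → V → ℕ) (v : V) : ℤ := ∑ u, (m u v : ℤ)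

/-- The digraph is loopless. -/
def Loopless (m : V → V → ℕ) : Prop := ∀ v, m v v = 0

/-- The digraph is strongly connected: every vertex reaches every vertex on a directed path. -/
def StronglyConnected (m : V → V → ℕ) : Prop :=
  ∀ u v : V, Relation.ReflTransGen (fun a b => 0 < m a b) u v

/-- Firing vertex `v` in chip-distribution `x`: `v` sends a chip along each outgoing edge. -/
def fire (m : V → V → ℕ) (x : V → ℤ) (v : V) : V → ℤ :=
  fun u => x u + (m v u : ℤ) - (if u = v then outdeg m v else 0)

/-- The degree (total number of chips) of a chip-distribution / divisor. -/
def degSum (x : V → ℤ) : ℤ := ∑ v, x v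

/-- The state of the chip-firing game after `n` steps, starting from `x` and
firing the vertices `s 0, s 1, …` in this order. -/
def gameState (m : V → V → ℕ) (x : V → ℤ) (s : ℕ → V) : ℕ → (V → ℤ)
  | 0 => x
  | n + 1 => fire m (gameState m x s n) (s n)

/-- `s` encodes an infinite legal chip-firing game starting from `x`:
at each step the fired vertex is active. -/
def InfGame (m : V → V → ℕ) (x : V → ℤ) (s : ℕ → V) : Prop :=
  ∀ n, outdeg m (s n) ≤ gameState m x s n (s n)

/-- A chip-distribution is terminating if no infinite legal game starts from it. -/
def Terminating (m : V → V → ℕ) (x : V → ℤ) : Prop :=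
  ¬ ∃ s : ℕ → V, InfGame m x s

/-- The Laplacian of the digraph applied to `z`. -/
def lap (m : V → V → ℕ) (z : V → ℤ) : V → ℤ :=
  fun u => (∑ v, (m v u : ℤ) * z v) - outdeg m u * z u

/-- Linear equivalence: `x ∼ y` iff `x = y + L z` for some integer vector `z`. -/
def LinEquiv (m : V → V → ℕ) (x y : V → ℤ) : Prop :=
  ∃ z : V → ℤ, x = y + lap m z

/-- The distance of `x` from the non-terminating distributions:
the minimum degree of a nonnegative `y` such that `x + y` is non-terminating. -/
noncomputable def chipDist (m : V → V → ℕ) (x : V → ℤ) : ℕ :=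
  sInf {n : ℕ | ∃ y : V → ℤ, 0 ≤ y ∧ degSum y = (n : ℤ) ∧ ¬ Terminating m (x + y)}

/-!
For an ordering `l` of the vertices let `orderConfig m l v = d⁺(v) - #(edges into v from vertices
before v in l)`. From any `x ≥ orderConfig m l` the vertices can be fired once each in the order
`l`, and on an Eulerian digraph this round brings `x` back to itself, so `x` is non-terminating.
Conversely, repeatedly firing maximal plays (each vertex at most once) from a non-terminating `x`
eventually fires every vertex in one play, by strong connectivity; hence every non-terminating
distribution dominates some `orderConfig m l + L z`. As non-termination is invariant under
linear equivalence, `dist x` is the least value of `deg (orderConfig m l + L z - x)⁺`.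

Reversing `l` gives `orderConfig m l.reverse = d⁺ - orderConfig m l`, which exchanges `x` with
`d⁺ - x` in this formula at the cost of `deg (orderConfig m l) - deg x`. So Riemann–Roch follows
once `deg (orderConfig m l) = |E|/2` for all `l`, which holds for bidirected graphs because the
degree is then invariant under permuting `l`. Conversely, Riemann–Roch at `x = orderConfig m l`,
where `dist x = 0`, gives `deg (orderConfig m l) ≥ |E|/2` for every `l`, with equality because
the degrees for `l` and `l.reverse` add up to `|E|`; and swapping two adjacent vertices `u, v`
of `l` changes the degree by `m v u - m u v`.
-/

def IsEulerian (m : V → V → ℕ) : Prop := ∀ v, outdeg m v = indeg m v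

def IsBidirected (m : V → V → ℕ) : Prop := ∀ u v, m u v = m v u

def HasNaturalRiemannRoch (m : V → V → ℕ) : Prop :=
  ∀ x : V → ℤ, (chipDist m x : ℚ) - (chipDist m (fun v => outdeg m v - x v) : ℚ)
    = (∑ u, ∑ v, (m u v : ℚ)) / 2 - (degSum x : ℚ)

theorem IsBidirected.isEulerian {V : Type} [Fintype V] {m : V → V → ℕ} (h : IsBidirected m) :
    IsEulerian m :=
  fun v => Finset.sum_congr rfl fun u _ => by rw [h]

theorem lap_add {V : Type} [Fintype V] (m : V → V → ℕ) (z₁ z₂ : V → ℤ) :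
    lap m (z₁ + z₂) = lap m z₁ + lap m z₂ := by
  funext u
  simp only [lap, Pi.add_apply, mul_add, Finset.sum_add_distrib]
  ring

theorem lap_zero {V : Type} [Fintype V] (m : V → V → ℕ) : lap m 0 = 0 := by
  funext u
  simp [lap]

theorem lap_neg {V : Type} [Fintype V] (m : V → V → ℕ) (z : V → ℤ) :
    lap m (-z) = -lap m z := by
  funext u
  simp only [lap, Pi.neg_apply, mul_neg, Finset.sum_neg_distrib]
  ring

theorem degSum_add {V : Type} [Fintype V] (x y : V → ℤ) :
    degSum (x + y) = degSum x + degSum y :=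
  Finset.sum_add_distrib

theorem degSum_sub {V : Type} [Fintype V] (x y : V → ℤ) :
    degSum (x - y) = degSum x - degSum y :=
  Finset.sum_sub_distrib _ _

theorem cast_sum_outdeg {V : Type} [Fintype V] (m : V → V → ℕ) :
    ((∑ v, outdeg m v : ℤ) : ℚ) = ∑ u, ∑ v, (m u v : ℚ) := by
  push_cast [outdeg]
  rfl

theorem degSum_lap {V : Type} [Fintype V] (m : V → V → ℕ) (z : V → ℤ) :
    degSum (lap m z) = 0 := by
  simp only [degSum, lap, Finset.sum_sub_distrib]
  rw [Finset.sum_comm, sub_eq_zero]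
  simp only [outdeg, Finset.sum_mul]

theorem lap_add_const {V : Type} [Fintype V] {m : V → V → ℕ} (heul : IsEulerian m)
    (z : V → ℤ) (k : ℤ) : lap m (fun v => z v + k) = lap m z := by
  funext u
  simp only [lap, mul_add, Finset.sum_add_distrib, ← Finset.sum_mul]
  rw [← indeg, ← heul u]
  ring

theorem LinEquiv.refl {V : Type} [Fintype V] (m : V → V → ℕ) (x : V → ℤ) :
    LinEquiv m x x :=
  ⟨0, by rw [lap_zero, add_zero]⟩

theorem LinEquiv.trans {V : Type} [Fintype V] {m : V → V → ℕ} {x y w : V → ℤ}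
    (h₁ : LinEquiv m x y) (h₂ : LinEquiv m y w) : LinEquiv m x w := by
  obtain ⟨z₁, rfl⟩ := h₁
  obtain ⟨z₂, rfl⟩ := h₂
  exact ⟨z₂ + z₁, by rw [lap_add, add_assoc]⟩

section Firing

variable (m : V → V → ℕ)

theorem fire_eq_add_lap (w : V → ℤ) (v : V) : fire m w v = w + lap m (Pi.single v 1) := by
  funext u
  simp only [fire, lap, Pi.add_apply, Pi.single_apply, mul_ite, mul_one, mul_zero,
    Finset.sum_ite_eq', Finset.mem_univ, if_true]
  split_ifs with h
  · subst h
    ring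
  · ring

theorem fire_add (w c : V → ℤ) (v : V) : fire m (w + c) v = fire m w v + c := by
  funext u
  simp only [fire, Pi.add_apply]
  ring

theorem gameState_add_right (x c : V → ℤ) (s : ℕ → V) (n : ℕ) :
    gameState m (x + c) s n = gameState m x s n + c := by
  induction n with
  | zero => rfl
  | succ n ih => simp only [gameState, ih, fire_add]

theorem gameState_add (x : V → ℤ) (s : ℕ → V) (a k : ℕ) :
    gameState m x s (a + k) = gameState m (gameState m x s a) (fun n => s (a + n)) k := by
  induction k with
  | zero => rfl
  | succ k ih => rw [← add_assoc, gameState, ih, gameState]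

theorem gameState_congr {x : V → ℤ} {s t : ℕ → V} {T : ℕ} (h : ∀ n < T, s n = t n) :
    ∀ n ≤ T, gameState m x s n = gameState m x t n := by
  intro n hn
  induction n with
  | zero => rfl
  | succ n ih => rw [gameState, gameState, ih (by omega), h n (by omega)]

variable {m}

theorem InfGame.not_terminating_gameState {x : V → ℤ} {s : ℕ → V} (hs : InfGame m x s)
    (a : ℕ) : ¬Terminating m (gameState m x s a) :=
  not_not.2 ⟨fun n => s (a + n), fun n => by rw [← gameState_add]; exact hs (a + n)⟩

theorem not_terminating_of_legal_prefix {x : V → ℤ} {s : ℕ → V} {T : ℕ}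
    (hs : ∀ n < T, outdeg m (s n) ≤ gameState m x s n (s n))
    (hT : ¬Terminating m (gameState m x s T)) : ¬Terminating m x := by
  obtain ⟨t, ht⟩ := not_not.1 hT
  let u : ℕ → V := fun n => if n < T then s n else t (n - T)
  have hu : ∀ n ≤ T, gameState m x u n = gameState m x s n :=
    gameState_congr m (fun n hn => if_pos hn)
  refine not_not.2 ⟨u, fun n => ?_⟩
  rcases lt_or_ge n T with hn | hn
  · rw [hu n hn.le]
    simpa [u, hn] using hs n hn
  · obtain ⟨k, rfl⟩ := Nat.exists_eq_add_of_le hn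
    have hshift : (fun n => u (T + n)) = t := by
      funext n
      simp [u]
    rw [gameState_add, hshift, hu T le_rfl]
    simpa [u] using ht k

theorem exists_active_of_not_terminating {w : V → ℤ} (hw : ¬Terminating m w) :
    ∃ v, outdeg m v ≤ w v := by
  obtain ⟨s, hs⟩ := not_not.1 hw
  exact ⟨s 0, hs 0⟩

theorem not_terminating_mono {x y : V → ℤ} (hx : ¬Terminating m x) (hxy : x ≤ y) :
    ¬Terminating m y := by
  obtain ⟨s, hs⟩ := not_not.1 hx
  have hy : y = x + (y - x) := by abel
  refine not_not.2 ⟨s, fun n => ?_⟩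
  rw [hy, gameState_add_right, Pi.add_apply, Pi.sub_apply]
  linarith [hs n, sub_nonneg.2 (hxy (s n))]

theorem lap_single_nonneg {u v : V} (h : u ≠ v) : 0 ≤ lap m (Pi.single v 1) u := by
  have := congrFun (fire_eq_add_lap m 0 v) u
  simp only [fire, Pi.zero_apply, Pi.add_apply, if_neg h] at this
  omega

theorem not_terminating_fire {x : V → ℤ} (hx : ¬Terminating m x) (v : V) :
    ¬Terminating m (fire m x v) := by
  -- drop the first firing of `v` from an infinite game of `x`: the firings before it stay legal,
  -- since `v` only adds chips to the other vertices
  obtain ⟨s, hs⟩ := not_not.1 hx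
  rw [fire_eq_add_lap]
  by_cases hv : ∃ n, s n = v
  · classical
    let T := Nat.find hv
    refine not_terminating_of_legal_prefix (s := s) (T := T) (fun n hn => ?_) ?_
    · rw [gameState_add_right, Pi.add_apply]
      linarith [hs n, lap_single_nonneg (m := m) (Nat.find_min hv hn)]
    · rw [gameState_add_right, ← Nat.find_spec hv, ← fire_eq_add_lap]
      exact InfGame.not_terminating_gameState hs (T + 1)
  · simp only [not_exists] at hv
    refine not_not.2 ⟨s, fun n => ?_⟩
    rw [gameState_add_right, Pi.add_apply]
    linarith [hs n, lap_single_nonneg (m := m) (hv n)]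

end Firing

section LinearEquivalence

variable {m : V → V → ℕ}

theorem not_terminating_add_lap_natCast {x : V → ℤ} (hx : ¬Terminating m x) (z : V → ℕ) :
    ¬Terminating m (x + lap m (fun v => (z v : ℤ))) := by
  let P : (V → ℤ) → Prop := fun z =>
    ∀ x, ¬Terminating m x → ¬Terminating m (x + lap m z)
  have hadd : ∀ a b, P a → P b → P (a + b) := fun a b ha hb x hx => by
    rw [lap_add, ← add_assoc]
    exact hb _ (ha x hx)
  have hzero : P 0 := fun x hx => by simpa [lap_zero] using hx
  have hsingle : ∀ v (n : ℕ), P (Pi.single v (n : ℤ)) := by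
    intro v n
    induction n with
    | zero => simpa using hzero
    | succ n ih =>
      rw [Nat.cast_succ, Pi.single_add]
      exact hadd _ _ ih fun x hx => by
        rw [← fire_eq_add_lap]
        exact not_terminating_fire hx v
  have := Finset.sum_induction (s := univ) (fun v => Pi.single v (z v : ℤ)) P hadd hzero
    fun v _ => hsingle v (z v)
  rw [Finset.univ_sum_single] at this
  exact this x hx

theorem not_terminating_add_lap (heul : IsEulerian m) {x : V → ℤ} (hx : ¬Terminating m x)
    (z : V → ℤ) : ¬Terminating m (x + lap m z) := by
  -- shift `z` to be nonnegative; constants lie in the kernel of the Laplacian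
  let k : ℤ := ∑ v, |z v|
  have hk : ∀ v, 0 ≤ z v + k := fun v => by
    have := Finset.single_le_sum (f := fun v => |z v|) (fun v _ => abs_nonneg _) (mem_univ v)
    linarith [neg_abs_le (z v)]
  have hz : lap m z = lap m (fun v => ((z v + k).toNat : ℤ)) := by
    simp only [Int.toNat_of_nonneg (hk _), lap_add_const heul]
  rw [hz]
  exact not_terminating_add_lap_natCast hx _

theorem LinEquiv.not_terminating_iff (heul : IsEulerian m) {x y : V → ℤ} (h : LinEquiv m x y) :
    ¬Terminating m x ↔ ¬Terminating m y := by
  obtain ⟨z, rfl⟩ := h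
  refine ⟨fun hx => ?_, fun hy => not_terminating_add_lap heul hy z⟩
  simpa [add_assoc, lap_neg] using not_terminating_add_lap heul hx (-z)

end LinearEquivalence

section FiringLists

variable (m : V → V → ℕ)

def fireList (w : V → ℤ) (l : List V) : V → ℤ := l.foldl (fire m) w

def LegalList : (V → ℤ) → List V → Prop
  | _, [] => True
  | w, v :: t => outdeg m v ≤ w v ∧ LegalList (fire m w v) t

def inflow (l : List V) (u : V) : ℤ := (l.map fun v => (m v u : ℤ)).sum

@[simp] theorem fireList_nil (w : V → ℤ) : fireList m w [] = w := rfl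

@[simp] theorem fireList_cons (w : V → ℤ) (a : V) (t : List V) :
    fireList m w (a :: t) = fireList m (fire m w a) t := rfl

theorem fireList_append (w : V → ℤ) (l₁ l₂ : List V) :
    fireList m w (l₁ ++ l₂) = fireList m (fireList m w l₁) l₂ :=
  List.foldl_append

@[simp] theorem legalList_nil (w : V → ℤ) : LegalList m w [] := trivial

@[simp] theorem legalList_cons (w : V → ℤ) (a : V) (t : List V) :
    LegalList m w (a :: t) ↔ outdeg m a ≤ w a ∧ LegalList m (fire m w a) t := Iff.rfl

theorem legalList_append (w : V → ℤ) (l₁ l₂ : List V) :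
    LegalList m w (l₁ ++ l₂) ↔
      LegalList m w l₁ ∧ LegalList m (fireList m w l₁) l₂ := by
  induction l₁ generalizing w with
  | nil => simp
  | cons a t ih => simp [ih, and_assoc]

theorem LegalList.outdeg_le {m} {w : V → ℤ} {l : List V} (h : LegalList m w l) {i : ℕ}
    (hi : i < l.length) : outdeg m l[i] ≤ fireList m w (l.take i) l[i] := by
  rw [← List.take_append_drop i l, legalList_append, List.drop_eq_getElem_cons hi] at h
  exact h.2.1

@[simp] theorem inflow_nil {V : Type} (m : V → V → ℕ) (u : V) : inflow m [] u = 0 := rfl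

@[simp] theorem inflow_cons {V : Type} (m : V → V → ℕ) (a : V) (t : List V) (u : V) :
    inflow m (a :: t) u = m a u + inflow m t u := by
  simp [inflow]

theorem inflow_append {V : Type} (m : V → V → ℕ) (l₁ l₂ : List V) (u : V) :
    inflow m (l₁ ++ l₂) u = inflow m l₁ u + inflow m l₂ u := by
  simp [inflow]

theorem inflow_nonneg {V : Type} (m : V → V → ℕ) (l : List V) (u : V) : 0 ≤ inflow m l u :=
  List.sum_nonneg fun _ h => by
    obtain ⟨v, -, rfl⟩ := List.mem_map.1 h
    positivity

theorem fireList_apply_of_not_mem (w : V → ℤ) {l : List V} {u : V} (h : u ∉ l) :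
    fireList m w l u = w u + inflow m l u := by
  induction l generalizing w with
  | nil => simp
  | cons a t ih =>
    rw [List.mem_cons, not_or] at h
    rw [fireList_cons, ih _ h.2, fire, if_neg h.1, inflow_cons]
    ring

theorem fireList_apply_of_mem {m} (hloop : Loopless m) (w : V → ℤ) {l : List V} {u : V}
    (hn : l.Nodup) (h : u ∈ l) : fireList m w l u = w u + inflow m l u - outdeg m u := by
  induction l generalizing w with
  | nil => simp at h
  | cons a t ih =>
    rw [List.nodup_cons] at hn
    by_cases hu : u = a
    · subst hu
      rw [fireList_cons, fireList_apply_of_not_mem m _ hn.1, fire, if_pos rfl, inflow_cons, hloop]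
      push_cast
      ring
    · rw [fireList_cons, ih _ hn.2 (List.mem_of_ne_of_mem hu h), fire, if_neg hu, inflow_cons]
      ring

theorem fireList_apply_of_mem_eq_sub {m} (hloop : Loopless m) (heul : IsEulerian m) (w : V → ℤ)
    {l : List V} (hn : l.Nodup) {u : V} (hu : u ∈ l) :
    fireList m w l u = w u - ∑ v with v ∉ l, (m v u : ℤ) := by
  have hin : indeg m u = inflow m l u + ∑ v with v ∉ l, (m v u : ℤ) := by
    rw [indeg, ← Finset.sum_filter_add_sum_filter_not univ (· ∈ l), inflow,
      ← List.sum_toFinset _ hn]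
    congr 2
    ext v
    simp
  rw [fireList_apply_of_mem hloop w hn hu, heul u, hin]
  ring

theorem fireList_linEquiv (w : V → ℤ) (l : List V) : LinEquiv m (fireList m w l) w := by
  induction l generalizing w with
  | nil => exact LinEquiv.refl m w
  | cons a t ih => exact (ih (fire m w a)).trans ⟨Pi.single a 1, fire_eq_add_lap m w a⟩

end FiringLists

section Orderings

variable (m : V → V → ℕ)

def IsOrdering (l : List V) : Prop := l.Nodup ∧ ∀ v, v ∈ l

theorem IsOrdering.reverse {V : Type} {l : List V} (h : IsOrdering l) : IsOrdering l.reverse :=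
  ⟨List.nodup_reverse.2 h.1, fun v => List.mem_reverse.2 (h.2 v)⟩

theorem IsOrdering.sum_map {M : Type} [AddCommMonoid M] {l : List V} (h : IsOrdering l)
    (f : V → M) : (l.map f).sum = ∑ v, f v := by
  rw [← List.sum_toFinset f h.1, Finset.eq_univ_of_forall fun v => List.mem_toFinset.2 (h.2 v)]

theorem IsOrdering.ne_nil {V : Type} [Nonempty V] {l : List V} (h : IsOrdering l) : l ≠ [] :=
  List.ne_nil_of_mem (h.2 (Classical.arbitrary V))

theorem inflow_of_isOrdering {l : List V} (h : IsOrdering l) (u : V) :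
    inflow m l u = indeg m u :=
  h.sum_map _

-- On a bidirected graph, `orderConfig m l v` is the outdegree of `v` in the acyclic orientation
-- of the edges from earlier to later vertices of `l`.
def orderConfig (l : List V) (v : V) : ℤ := outdeg m v - inflow m (l.takeWhile (· ≠ v)) v

theorem orderConfig_cons_self (v : V) (t : List V) : orderConfig m (v :: t) v = outdeg m v := by
  simp [orderConfig]

theorem orderConfig_cons_of_ne {a v : V} (h : a ≠ v) (t : List V) :
    orderConfig m (a :: t) v = orderConfig m t v - m a v := by
  rw [orderConfig, orderConfig, List.takeWhile_cons_of_pos (by simpa using h), inflow_cons]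
  ring

theorem legalList_iff_orderConfig_le {w : V → ℤ} {l : List V} (hn : l.Nodup) :
    LegalList m w l ↔ ∀ v ∈ l, orderConfig m l v ≤ w v := by
  induction l generalizing w with
  | nil => simp
  | cons a t ih =>
    rw [List.nodup_cons] at hn
    have hne : ∀ v ∈ t, a ≠ v := fun v hv h => hn.1 (h ▸ hv)
    rw [legalList_cons, ih hn.2, List.forall_mem_cons, orderConfig_cons_self]
    refine and_congr_right fun _ => forall₂_congr fun v hv => ?_
    rw [orderConfig_cons_of_ne m (hne v hv), fire, if_neg (hne v hv).symm]
    constructor <;> intro <;> linarith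

theorem fireList_apply_nonneg_of_mem {m} (hloop : Loopless m) {w : V → ℤ} {l : List V}
    (hleg : LegalList m w l) (hn : l.Nodup) {u : V} (hu : u ∈ l) : 0 ≤ fireList m w l u := by
  have hc := (legalList_iff_orderConfig_le m hn).1 hleg u hu
  have hsplit := inflow_append m (l.takeWhile (· ≠ u)) (l.dropWhile (· ≠ u)) u
  rw [List.takeWhile_append_dropWhile] at hsplit
  rw [orderConfig] at hc
  rw [fireList_apply_of_mem hloop w hn hu]
  linarith [inflow_nonneg m (l.dropWhile (· ≠ u)) u]

theorem takeWhile_ne_append {V : Type} [DecidableEq V] {p q : List V} {v : V} (hv : v ∉ p) :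
    (p ++ v :: q).takeWhile (· ≠ v) = p := by
  have hp : ∀ a ∈ p, decide (a ≠ v) = true :=
    fun a ha => decide_eq_true fun h => hv (h ▸ ha)
  rw [List.takeWhile_append_of_pos hp, List.takeWhile_cons_of_neg (by simp), List.append_nil]

theorem orderConfig_reverse {m} (hloop : Loopless m) (heul : IsEulerian m) {l : List V}
    (hl : IsOrdering l) (v : V) : orderConfig m l.reverse v = outdeg m v - orderConfig m l v := by
  obtain ⟨p, q, rfl⟩ := List.append_of_mem (hl.2 v)
  have hn := hl.1
  rw [List.nodup_append, List.nodup_cons] at hn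
  have hvp : v ∉ p := fun h => hn.2.2 v h v List.mem_cons_self rfl
  have hvq : v ∉ q.reverse := by simpa using hn.2.1.1
  have hrev : (p ++ v :: q).reverse = q.reverse ++ v :: p.reverse := by simp
  have hin := inflow_of_isOrdering m hl v
  rw [inflow_append, inflow_cons, hloop v, ← heul v] at hin
  simp only [orderConfig, hrev, takeWhile_ne_append hvp, takeWhile_ne_append hvq]
  simp only [inflow, List.map_reverse, List.sum_reverse] at hin ⊢
  push_cast at hin
  linarith

theorem fireList_eq_self_of_isOrdering {m} (hloop : Loopless m) (heul : IsEulerian m)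
    (w : V → ℤ) {l : List V} (hl : IsOrdering l) : fireList m w l = w := by
  funext u
  rw [fireList_apply_of_mem hloop w hl.1 (hl.2 u), inflow_of_isOrdering m hl, ← heul u]
  ring

theorem not_terminating_of_legal_cycle {w : V → ℤ} {l : List V} (hne : l ≠ [])
    (hleg : LegalList m w l) (hcyc : fireList m w l = w) : ¬Terminating m w := by
  set N := l.length
  have hN : 0 < N := List.length_pos_iff.2 hne
  let s : ℕ → V := fun n => l[n % N]'(Nat.mod_lt n hN)
  have hfirst : ∀ i ≤ N, gameState m w s i = fireList m w (l.take i) := by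
    intro i hi
    induction i with
    | zero => rfl
    | succ i ih =>
      have hs : s i = l[i] := by simp only [s, Nat.mod_eq_of_lt (show i < N by omega)]
      rw [gameState, ih (by omega), hs, List.take_add_one, List.getElem?_eq_getElem (by omega),
        Option.toList_some, fireList_append]
      rfl
  have hperiod : ∀ q r, gameState m w s (N * q + r) = gameState m w s r := by
    intro q r
    induction q with
    | zero => simp
    | succ q ih =>
      have hshift : (fun n => s (N + n)) = s := funext fun n => by simp [s]
      rw [Nat.mul_succ, add_comm (N * q), add_assoc, gameState_add, hfirst N le_rfl,
        List.take_length, hcyc, hshift, ih]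
  refine not_not.2 ⟨s, fun n => ?_⟩
  rw [← Nat.div_add_mod n N, hperiod, hfirst _ (Nat.mod_lt n hN).le]
  simpa [s] using hleg.outdeg_le (Nat.mod_lt n hN)

theorem not_terminating_orderConfig [Nonempty V] {m} (hloop : Loopless m)
    (heul : IsEulerian m) {l : List V} (hl : IsOrdering l) : ¬Terminating m (orderConfig m l) :=
  not_terminating_of_legal_cycle m hl.ne_nil
    ((legalList_iff_orderConfig_le m hl.1).2 fun _ _ => le_rfl)
    (fireList_eq_self_of_isOrdering hloop heul _ hl)

end Orderings

section OrderDegree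

variable (m : V → V → ℕ)

def orderDeg (l : List V) : ℤ := (l.map (orderConfig m l)).sum

theorem orderDeg_of_isOrdering {l : List V} (hl : IsOrdering l) :
    orderDeg m l = degSum (orderConfig m l) :=
  hl.sum_map _

theorem orderDeg_cons {a : V} {t : List V} (ha : a ∉ t) :
    orderDeg m (a :: t) + (t.map fun v => (m a v : ℤ)).sum = outdeg m a + orderDeg m t := by
  simp only [orderDeg, List.map_cons, List.sum_cons, orderConfig_cons_self, add_assoc,
    ← List.sum_map_add]
  congr 2
  refine List.map_congr_left fun v hv => ?_
  rw [orderConfig_cons_of_ne m (fun h : a = v => ha (h ▸ hv))]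
  ring

theorem orderDeg_swap {a b : V} {t : List V} (hab : a ≠ b) (ha : a ∉ t) (hb : b ∉ t) :
    orderDeg m (a :: b :: t) + m a b = orderDeg m (b :: a :: t) + m b a := by
  have h₁ := orderDeg_cons m (a := a) (t := b :: t) (by simp [hab, ha])
  have h₂ := orderDeg_cons m (a := b) (t := a :: t) (by simp [hab.symm, hb])
  have h₃ := orderDeg_cons m ha
  have h₄ := orderDeg_cons m hb
  simp only [List.map_cons, List.sum_cons] at h₁ h₂
  linarith

theorem orderDeg_perm {m : V → V → ℕ} (hsym : IsBidirected m) {l₁ l₂ : List V}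
    (h : l₁.Perm l₂) (hn : l₁.Nodup) : orderDeg m l₁ = orderDeg m l₂ := by
  induction h with
  | nil => rfl
  | cons a h ih =>
    rw [List.nodup_cons] at hn
    have h₁ := orderDeg_cons m hn.1
    have h₂ := orderDeg_cons m (mt h.mem_iff.2 hn.1)
    rw [(h.map _).sum_eq, ih hn.2] at h₁
    linarith
  | swap a b t =>
    simp only [List.nodup_cons, List.mem_cons, not_or] at hn
    have := orderDeg_swap m hn.1.1 hn.1.2 hn.2.1
    rw [hsym b a] at this
    linarith
  | trans h₁₂ _ ih₁ ih₂ => rw [ih₁ hn, ih₂ (h₁₂.nodup_iff.1 hn)]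

theorem orderDeg_add_orderDeg_reverse {m : V → V → ℕ} (hloop : Loopless m)
    (heul : IsEulerian m) {l : List V} (hl : IsOrdering l) :
    orderDeg m l + orderDeg m l.reverse = ∑ v, outdeg m v := by
  rw [orderDeg_of_isOrdering m hl, orderDeg_of_isOrdering m hl.reverse, degSum, degSum,
    ← Finset.sum_add_distrib]
  simp only [orderConfig_reverse hloop heul hl, add_sub_cancel]

theorem two_mul_orderDeg {m : V → V → ℕ} (hloop : Loopless m) (hsym : IsBidirected m)
    {l : List V} (hl : IsOrdering l) : 2 * orderDeg m l = ∑ v, outdeg m v := by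
  have := orderDeg_perm hsym (List.reverse_perm l).symm hl.1
  linarith [orderDeg_add_orderDeg_reverse hloop hsym.isEulerian hl]

end OrderDegree

theorem eventually_succ_eq_of_decreasing {g : ℕ → ℤ}
    (h : ∀ᶠ k in Filter.atTop, 0 ≤ g (k + 1) ∧ g (k + 1) ≤ g k) :
    ∀ᶠ k in Filter.atTop, g (k + 1) = g k := by
  obtain ⟨K, hK⟩ := Filter.eventually_atTop.1 h
  have hf : Antitone fun j => (g (K + j)).toNat :=
    antitone_nat_of_succ_le fun j => Int.toNat_le_toNat (hK (K + j) (by omega)).2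
  obtain ⟨J, hJ⟩ := WellFoundedLT.antitone_chain_condition hf
  refine Filter.eventually_atTop.2 ⟨K + J + 1, fun k hk => ?_⟩
  obtain ⟨i, rfl⟩ := Nat.exists_eq_add_of_le hk
  have h₁ := hJ (J + i + 1) (by omega)
  have h₂ := hJ (J + i + 2) (by omega)
  have h₃ : 0 ≤ g (K + (J + i + 1)) := (hK (K + (J + i)) (by omega)).1
  have h₄ : 0 ≤ g (K + (J + i + 2)) := (hK (K + (J + i + 1)) (by omega)).1
  rw [show K + J + 1 + i = K + (J + i + 1) by omega]
  change g (K + (J + i + 2)) = _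
  omega

section MaximalPlays

variable (m : V → V → ℕ)

def IsMaxPlay (w : V → ℤ) (l : List V) : Prop :=
  LegalList m w l ∧ l.Nodup ∧ ∀ u ∉ l, fireList m w l u < outdeg m u

theorem exists_isMaxPlay (w : V → ℤ) : ∃ l, IsMaxPlay m w l := by
  by_contra! h
  simp only [IsMaxPlay, not_and, not_forall, not_lt] at h
  have hlong : ∀ k, ∃ l, LegalList m w l ∧ l.Nodup ∧ l.length = k := by
    intro k
    induction k with
    | zero => exact ⟨[], trivial, List.nodup_nil, rfl⟩
    | succ k ih =>
      obtain ⟨l, hleg, hn, rfl⟩ := ih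
      obtain ⟨u, hu, hact⟩ := h l hleg hn
      refine ⟨l ++ [u], (legalList_append m w l [u]).2 ⟨hleg, hact, trivial⟩, ?_, by simp⟩
      exact List.nodup_append.2
        ⟨hn, List.nodup_singleton u, by simpa using fun a ha (h : a = u) => hu (h ▸ ha)⟩
  obtain ⟨l, -, hn, hlen⟩ := hlong (Fintype.card V + 1)
  have := hn.length_le_card
  omega

noncomputable def maxPlay (w : V → ℤ) : List V := (exists_isMaxPlay m w).choose

theorem isMaxPlay_maxPlay (w : V → ℤ) : IsMaxPlay m w (maxPlay m w) :=
  (exists_isMaxPlay m w).choose_spec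

noncomputable def playSeq (x : V → ℤ) : ℕ → V → ℤ
  | 0 => x
  | k + 1 => fireList m (playSeq x k) (maxPlay m (playSeq x k))

variable {m}

theorem playSeq_linEquiv (x : V → ℤ) (k : ℕ) : LinEquiv m (playSeq m x k) x := by
  induction k with
  | zero => exact LinEquiv.refl m x
  | succ k ih => exact (fireList_linEquiv m _ _).trans ih

theorem not_terminating_playSeq (heul : IsEulerian m) {x : V → ℤ} (hx : ¬Terminating m x)
    (k : ℕ) : ¬Terminating m (playSeq m x k) :=
  ((playSeq_linEquiv x k).not_terminating_iff heul).2 hx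

theorem playSeq_succ_lt_of_not_mem {x : V → ℤ} {k : ℕ} {u : V}
    (hu : u ∉ maxPlay m (playSeq m x k)) : playSeq m x (k + 1) u < outdeg m u :=
  (isMaxPlay_maxPlay m _).2.2 u hu

theorem playSeq_succ_of_mem (hloop : Loopless m) (heul : IsEulerian m) {x : V → ℤ} {k : ℕ}
    {u : V} (hu : u ∈ maxPlay m (playSeq m x k)) :
    playSeq m x (k + 1) u
      = playSeq m x k u - ∑ v with v ∉ maxPlay m (playSeq m x k), (m v u : ℤ) :=
  fireList_apply_of_mem_eq_sub hloop heul _ (isMaxPlay_maxPlay m _).2.1 hu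

theorem playSeq_succ_le_of_mem (hloop : Loopless m) (heul : IsEulerian m) {x : V → ℤ} {k : ℕ}
    {u : V} (hu : u ∈ maxPlay m (playSeq m x k)) : playSeq m x (k + 1) u ≤ playSeq m x k u := by
  rw [playSeq_succ_of_mem hloop heul hu, sub_le_self_iff]
  positivity

theorem playSeq_succ_nonneg_of_mem (hloop : Loopless m) {x : V → ℤ} {k : ℕ} {u : V}
    (hu : u ∈ maxPlay m (playSeq m x k)) : 0 ≤ playSeq m x (k + 1) u :=
  fireList_apply_nonneg_of_mem hloop (isMaxPlay_maxPlay m _).1 (isMaxPlay_maxPlay m _).2.1 hu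

theorem playSeq_lt_outdeg_of_not_mem (hloop : Loopless m) (heul : IsEulerian m) {x : V → ℤ}
    {k : ℕ} {u : V} (hu : u ∉ maxPlay m (playSeq m x k)) (j : ℕ) :
    playSeq m x (k + 1 + j) u < outdeg m u := by
  induction j with
  | zero => exact playSeq_succ_lt_of_not_mem hu
  | succ j ih =>
    by_cases h : u ∈ maxPlay m (playSeq m x (k + 1 + j))
    · exact (playSeq_succ_le_of_mem hloop heul h).trans_lt ih
    · exact playSeq_succ_lt_of_not_mem h

theorem exists_eventually_mem_maxPlay (hloop : Loopless m) (heul : IsEulerian m)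
    {x : V → ℤ} (hx : ¬Terminating m x) :
    ∃ u, ∀ᶠ k in Filter.atTop, u ∈ maxPlay m (playSeq m x k) := by
  -- otherwise every vertex is missed by some round and is inactive at the start of all later
  -- rounds; but every round starts with an active vertex
  by_contra! h
  choose k hk using fun u => (h u).exists
  obtain ⟨v, hv⟩ := exists_active_of_not_terminating
    (not_terminating_playSeq heul hx (univ.sup k + 1))
  have hlt := playSeq_lt_outdeg_of_not_mem hloop heul (hk v) (univ.sup k - k v)
  rw [show k v + 1 + (univ.sup k - k v) = univ.sup k + 1 by
    have := Finset.le_sup (f := k) (mem_univ v); omega] at hlt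
  exact hlt.not_ge hv

theorem eventually_mem_maxPlay_of_adj (hloop : Loopless m) (heul : IsEulerian m)
    {x : V → ℤ} {a b : V} (hb : ∀ᶠ k in Filter.atTop, b ∈ maxPlay m (playSeq m x k))
    (hab : 0 < m a b) : ∀ᶠ k in Filter.atTop, a ∈ maxPlay m (playSeq m x k) := by
  -- once `b` is in every round its chips decrease to a constant, so eventually no round misses
  -- an in-neighbour of `b`
  have hconst := eventually_succ_eq_of_decreasing (g := fun k => playSeq m x k b)
    (hb.mono fun k hk =>
      ⟨playSeq_succ_nonneg_of_mem hloop hk, playSeq_succ_le_of_mem hloop heul hk⟩)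
  filter_upwards [hb, hconst] with k hbk hk
  by_contra ha
  have hcut := playSeq_succ_of_mem hloop heul hbk
  have hle : (m a b : ℤ) ≤ ∑ v with v ∉ maxPlay m (playSeq m x k), (m v b : ℤ) :=
    Finset.single_le_sum (f := fun v => (m v b : ℤ)) (fun _ _ => by positivity)
      (by simpa using ha)
  omega

theorem eventually_forall_mem_maxPlay (hloop : Loopless m) (hconn : StronglyConnected m)
    (heul : IsEulerian m) {x : V → ℤ} (hx : ¬Terminating m x) :
    ∀ᶠ k in Filter.atTop, ∀ u, u ∈ maxPlay m (playSeq m x k) := by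
  obtain ⟨u₀, hu₀⟩ := exists_eventually_mem_maxPlay hloop heul hx
  refine Filter.eventually_all.2 fun a => ?_
  induction hconn a u₀ using Relation.ReflTransGen.head_induction_on with
  | refl => exact hu₀
  | head hab _ ih => exact eventually_mem_maxPlay_of_adj hloop heul ih hab

theorem exists_orderConfig_le_add_lap (hloop : Loopless m) (hconn : StronglyConnected m)
    (heul : IsEulerian m) {x : V → ℤ} (hx : ¬Terminating m x) :
    ∃ l z, IsOrdering l ∧ orderConfig m l ≤ x + lap m z := by
  obtain ⟨k, hk⟩ := (eventually_forall_mem_maxPlay hloop hconn heul hx).exists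
  obtain ⟨z, hz⟩ := playSeq_linEquiv x k
  have hmax := isMaxPlay_maxPlay m (playSeq m x k)
  refine ⟨_, z, ⟨hmax.2.1, hk⟩, fun v => ?_⟩
  rw [← hz]
  exact (legalList_iff_orderConfig_le m hmax.2.1).1 hmax.1 v (hk v)

end MaximalPlays

section Distance

variable {m : V → V → ℕ}

theorem chipDist_le_degSum {x y : V → ℤ} (hy : 0 ≤ y) (h : ¬Terminating m (x + y)) :
    (chipDist m x : ℤ) ≤ degSum y := by
  have hdeg : 0 ≤ degSum y := Finset.sum_nonneg fun v _ => hy v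
  have hmem : (degSum y).toNat ∈
      {n : ℕ | ∃ y : V → ℤ, 0 ≤ y ∧ degSum y = n ∧ ¬Terminating m (x + y)} :=
    ⟨y, hy, (Int.toNat_of_nonneg hdeg).symm, h⟩
  have := Nat.sInf_le hmem
  rw [chipDist]
  omega

theorem exists_degSum_eq_chipDist {x y : V → ℤ} (hy : 0 ≤ y) (h : ¬Terminating m (x + y)) :
    ∃ y, 0 ≤ y ∧ ¬Terminating m (x + y) ∧ degSum y = chipDist m x := by
  have hdeg : 0 ≤ degSum y := Finset.sum_nonneg fun v _ => hy v
  have hne :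
    {n : ℕ | ∃ y : V → ℤ, 0 ≤ y ∧ degSum y = n ∧ ¬Terminating m (x + y)}.Nonempty :=
    ⟨_, y, hy, (Int.toNat_of_nonneg hdeg).symm, h⟩
  obtain ⟨y', hy', hdeg', h'⟩ := Nat.sInf_mem hne
  exact ⟨y', hy', h', hdeg'⟩

theorem chipDist_le_degSum_posPart {D : V → ℤ} (hD : ¬Terminating m D) (x : V → ℤ) :
    (chipDist m x : ℤ) ≤ degSum (D - x)⁺ :=
  chipDist_le_degSum (posPart_nonneg _)
    (not_terminating_mono hD (sub_le_iff_le_add'.1 (le_posPart _)))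

theorem exists_degSum_posPart_le_chipDist [Nonempty V] (hloop : Loopless m)
    (hconn : StronglyConnected m) (heul : IsEulerian m) (x : V → ℤ) :
    ∃ l z, IsOrdering l ∧ degSum (orderConfig m l + lap m z - x)⁺ ≤ chipDist m x := by
  have hl₀ : IsOrdering (univ : Finset V).toList :=
    ⟨Finset.nodup_toList _, fun v => Finset.mem_toList.2 (mem_univ v)⟩
  obtain ⟨y, hy, hyt, hdeg⟩ := exists_degSum_eq_chipDist (posPart_nonneg _)
    (not_terminating_mono (not_terminating_orderConfig hloop heul hl₀)
      (sub_le_iff_le_add'.1 (le_posPart (orderConfig m _ - x))))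
  obtain ⟨l, z, hl, hle⟩ := exists_orderConfig_le_add_lap hloop hconn heul hyt
  refine ⟨l, -z, hl, hdeg ▸ Finset.sum_le_sum fun v _ => ?_⟩
  have := hle v
  simp only [Pi.posPart_apply, Pi.sub_apply, Pi.add_apply, lap_neg, Pi.neg_apply] at this ⊢
  exact sup_le (by linarith) (hy v)

end Distance

section RiemannRoch

variable {m : V → V → ℕ}

theorem chipDist_outdeg_sub_le [Nonempty V] (hloop : Loopless m) (hconn : StronglyConnected m)
    (hsym : IsBidirected m) (x : V → ℤ) :
    2 * (chipDist m (fun v => outdeg m v - x v) : ℤ) + ∑ v, outdeg m v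
      ≤ 2 * chipDist m x + 2 * degSum x := by
  have heul := hsym.isEulerian
  obtain ⟨l, z, hl, hle⟩ := exists_degSum_posPart_le_chipDist hloop hconn heul x
  -- the reversed ordering realises the dual divisor `outdeg - D` of `D = orderConfig m l + lap m z`
  have hdual := chipDist_le_degSum_posPart
    (not_terminating_add_lap heul (not_terminating_orderConfig hloop heul hl.reverse) (-z))
    (fun v => outdeg m v - x v)
  have hswap : degSum (orderConfig m l.reverse + lap m (-z) - fun v => outdeg m v - x v)⁺
      = degSum (orderConfig m l + lap m z - x)⁺ - degSum (orderConfig m l + lap m z - x) := by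
    rw [← degSum_sub]
    refine Finset.sum_congr rfl fun v _ => ?_
    simp only [Pi.posPart_apply, Pi.sub_apply, Pi.add_apply, lap_neg, Pi.neg_apply,
      orderConfig_reverse hloop heul hl]
    rw [show outdeg m v - orderConfig m l v + -lap m z v - (outdeg m v - x v)
      = -(orderConfig m l v + lap m z v - x v) by ring, posPart_neg]
    linarith [posPart_sub_negPart (orderConfig m l v + lap m z v - x v)]
  rw [degSum_sub, degSum_add, degSum_lap, ← orderDeg_of_isOrdering m hl] at hswap
  linarith [two_mul_orderDeg hloop hsym hl]

theorem hasNaturalRiemannRoch_of_isBidirected [Nonempty V] (hloop : Loopless m)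
    (hconn : StronglyConnected m) (hsym : IsBidirected m) : HasNaturalRiemannRoch m := by
  intro x
  have h₁ := chipDist_outdeg_sub_le hloop hconn hsym x
  have h₂ := chipDist_outdeg_sub_le hloop hconn hsym (fun v => outdeg m v - x v)
  have hdeg : degSum (fun v => outdeg m v - x v) = ∑ v, outdeg m v - degSum x :=
    Finset.sum_sub_distrib _ _
  simp only [sub_sub_cancel, hdeg] at h₂
  rw [← cast_sum_outdeg]
  have : 2 * ((chipDist m x : ℤ) - chipDist m (fun v => outdeg m v - x v))
      = ∑ v, outdeg m v - 2 * degSum x := by linarith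
  have hq : (2 : ℚ) * ((chipDist m x : ℚ) - (chipDist m (fun v => outdeg m v - x v) : ℚ))
      = ((∑ v, outdeg m v : ℤ) : ℚ) - 2 * (degSum x : ℚ) := by exact_mod_cast this
  linarith

theorem chipDist_orderConfig [Nonempty V] (hloop : Loopless m) (heul : IsEulerian m)
    {l : List V} (hl : IsOrdering l) : chipDist m (orderConfig m l) = 0 := by
  have := chipDist_le_degSum le_rfl (by simpa using not_terminating_orderConfig hloop heul hl)
  simp only [degSum, Pi.zero_apply, Finset.sum_const_zero] at this
  omega

theorem two_mul_orderDeg_of_hasNaturalRiemannRoch [Nonempty V] (hloop : Loopless m)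
    (heul : IsEulerian m) (hRR : HasNaturalRiemannRoch m) {l : List V} (hl : IsOrdering l) :
    2 * orderDeg m l = ∑ v, outdeg m v := by
  -- at an order configuration the distance vanishes, so RR bounds its degree from below
  have hge : ∀ l, IsOrdering l → ∑ v, outdeg m v ≤ 2 * orderDeg m l := by
    intro l hl
    have hrr := hRR (orderConfig m l)
    rw [chipDist_orderConfig hloop heul hl, ← orderDeg_of_isOrdering m hl,
      ← cast_sum_outdeg] at hrr
    have : (0 : ℚ) ≤ chipDist m (fun v => outdeg m v - orderConfig m l v) := Nat.cast_nonneg _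
    exact_mod_cast (by linarith : ((∑ v, outdeg m v : ℤ) : ℚ) ≤ 2 * (orderDeg m l : ℚ))
  linarith [hge l hl, hge _ hl.reverse, orderDeg_add_orderDeg_reverse hloop heul hl]

theorem isBidirected_of_forall_two_mul_orderDeg
    (h : ∀ l, IsOrdering l → 2 * orderDeg m l = ∑ v, outdeg m v) : IsBidirected m := by
  intro u v
  rcases eq_or_ne u v with rfl | huv
  · rfl
  let r := ((univ.erase u).erase v).toList
  have hu : u ∉ r := by simp [r]
  have hv : v ∉ r := by simp [r]
  have hr : ∀ w, w ∈ r ∨ w = u ∨ w = v := fun w => by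
    by_cases hwu : w = u
    · exact Or.inr (Or.inl hwu)
    · by_cases hwv : w = v
      · exact Or.inr (Or.inr hwv)
      · exact Or.inl (by simp [r, hwu, hwv])
  have huvr : IsOrdering (u :: v :: r) := ⟨by simp [r, huv, hu, Finset.nodup_toList],
    fun w => by rcases hr w with h | rfl | rfl <;> simp [h]⟩
  have hvur : IsOrdering (v :: u :: r) := ⟨by simp [r, huv.symm, hv, Finset.nodup_toList],
    fun w => by rcases hr w with h | rfl | rfl <;> simp [h]⟩
  have := orderDeg_swap m huv hu hv
  have := h _ huvr
  have := h _ hvur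
  omega

theorem isBidirected_of_hasNaturalRiemannRoch [Nonempty V] (hloop : Loopless m)
    (heul : IsEulerian m) (hRR : HasNaturalRiemannRoch m) : IsBidirected m :=
  isBidirected_of_forall_two_mul_orderDeg fun _ hl =>
    two_mul_orderDeg_of_hasNaturalRiemannRoch hloop heul hRR hl

end RiemannRoch

/-- A strongly connected Eulerian digraph has the natural Riemann–Roch property, i.e.
`dist(x) - dist(d⁺ - x) = |E(G)|/2 - deg(x)` for every chip-distribution `x`,
if and only if it is bidirected. -/
theorem natural_riemann_roch_iff_bidirected
    {V : Type} [Fintype V] [DecidableEq V] [Nonempty V]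
    (m : V → V → ℕ) (hloop : Loopless m) (hconn : StronglyConnected m)
    (heul : ∀ v, outdeg m v = indeg m v) :
    (∀ x : V → ℤ, (chipDist m x : ℚ) - (chipDist m (fun v => outdeg m v - x v) : ℚ)
        = (∑ u, ∑ v, (m u v : ℚ)) / 2 - (degSum x : ℚ))
    ↔ ∀ u v : V, m u v = m v u :=
  ⟨isBidirected_of_hasNaturalRiemannRoch hloop heul,
    hasNaturalRiemannRoch_of_isBidirected hloop hconn⟩
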